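/- Let A be a finite set of players with at least two elements and let v be a coalitional value function on A with v(C) = 0 whenever C has at most one element. Suppose a' ∈ A is a dummy player, i.e., v(C) − v(C \ {a'}) = 0 for every subset C ⊆ A, and let ε* ∈ ℝ be the least-core value of v (K(v,ε*) ≠ ∅ and K(v,ε) = ∅ for every ε < ε*). Then every allocation β in the least-core K(v,ε*) satisfies β_{a'} = 0. -/

import Mathlib

/-- The strong ε-core of a coalitional game with value function `v`. -/
def eCore {α : Type*} [Fintype α] [DecidableEq α] (v : Finset α → ℝ) (ε : ℝ) :
    Set (α → ℝ) :=
  {β | ∑ a, β a = v Finset.univ ∧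
    ∀ C : Finset α, C.Nonempty → C ≠ Finset.univ → v C - ε ≤ ∑ a ∈ C, β a}

/-!
If the dummy player `a` is paid `t = β a ≠ 0` in an ε-core allocation `β`, let `a` hand `t / 2`
over to the other `m = |A| - 1` players in equal shares (a negative transfer if `t < 0`).
Since adding or removing `a` never changes the value of a coalition, every constraint of the
ε-core becomes slack by at least `|t| / (2m)`, so the new allocation lies in a strictly smaller
core and `ε` was not the least-core value.
-/

open Finset

lemma one_le_card_sub_one {α : Type*} [Fintype α] (hα : 2 ≤ Fintype.card α) :
    (1 : ℝ) ≤ Fintype.card α - 1 := by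
  have : (2 : ℝ) ≤ Fintype.card α := by exact_mod_cast hα
  linarith

section LeastCore

variable {α : Type*} [Fintype α] [DecidableEq α]

noncomputable def redistribute (a : α) (d : ℝ) (β : α → ℝ) : α → ℝ :=
  fun b => if b = a then β a - d else β b + d / (Fintype.card α - 1)

@[simp]
lemma redistribute_self (a : α) (d : ℝ) (β : α → ℝ) : redistribute a d β a = β a - d :=
  if_pos rfl

lemma sum_redistribute_of_notMem {a : α} {C : Finset α} (d : ℝ) (β : α → ℝ) (ha : a ∉ C) :
    ∑ b ∈ C, redistribute a d β b = ∑ b ∈ C, β b + C.card * (d / (Fintype.card α - 1)) := by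
  rw [sum_congr rfl fun b hb => show redistribute a d β b = β b + _ from
    if_neg (ne_of_mem_of_not_mem hb ha), sum_add_distrib, sum_const, nsmul_eq_mul]

lemma sum_redistribute_of_mem {a : α} {C : Finset α} (d : ℝ) (β : α → ℝ) (ha : a ∈ C) :
    ∑ b ∈ C, redistribute a d β b =
      ∑ b ∈ C, β b - d + (C.erase a).card * (d / (Fintype.card α - 1)) := by
  rw [← add_sum_erase C _ ha, ← add_sum_erase C β ha,
    sum_redistribute_of_notMem d β (notMem_erase a C), redistribute_self]
  ring

lemma sum_univ_redistribute (hα : 2 ≤ Fintype.card α) (a : α) (d : ℝ) (β : α → ℝ) :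
    ∑ b, redistribute a d β b = ∑ b, β b := by
  have hm : (Fintype.card α : ℝ) - 1 ≠ 0 := (one_le_card_sub_one hα).trans_lt' one_pos |>.ne'
  rw [sum_redistribute_of_mem d β (mem_univ a), card_erase_of_mem (mem_univ a), card_univ,
    Nat.cast_sub (by omega), Nat.cast_one, mul_div_cancel₀ d hm]
  ring

variable {v : Finset α → ℝ} {ε : ℝ} {β : α → ℝ} {a : α}

lemma nonneg_of_mem_eCore (hα : 2 ≤ Fintype.card α) (h₀ : v ∅ = 0)
    (hdum : ∀ C, v (C.erase a) = v C) (hβ : β ∈ eCore v ε) : 0 ≤ ε := by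
  have : Nontrivial α := Fintype.one_lt_card_iff_nontrivial.mp hα
  have hrest : univ.erase a ≠ univ := fun h => notMem_erase a univ (h.symm ▸ mem_univ a)
  have hrest_ne : (univ.erase a).Nonempty := by
    rw [← card_pos, card_erase_of_mem (mem_univ a), card_univ]
    omega
  have h₁ := hβ.2 {a} (singleton_nonempty a) (singleton_ne_univ a)
  have h₂ := hβ.2 _ hrest_ne hrest
  rw [← hdum, erase_singleton, h₀, sum_singleton] at h₁
  rw [hdum, ← hβ.1, ← add_sum_erase univ β (mem_univ a)] at h₂
  linarith

lemma sub_le_sum_of_mem_eCore (hε : 0 ≤ ε) (h₀ : v ∅ = 0) (hβ : β ∈ eCore v ε)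
    (C : Finset α) : v C - ε ≤ ∑ b ∈ C, β b := by
  rcases C.eq_empty_or_nonempty with rfl | hC
  · simpa [h₀] using hε
  · by_cases hCu : C = univ
    · rw [hCu, hβ.1]
      linarith
    · exact hβ.2 C hC hCu

lemma redistribute_mem_eCore_of_pos (hα : 2 ≤ Fintype.card α) (h₀ : v ∅ = 0)
    (hdum : ∀ C, v (C.erase a) = v C) (hβ : β ∈ eCore v ε) (hε : 0 ≤ ε) (ht : 0 < β a) :
    redistribute a (β a / 2) β ∈ eCore v (ε - β a / 2 / (Fintype.card α - 1)) := by
  set m : ℝ := Fintype.card α - 1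
  have hm : 1 ≤ m := one_le_card_sub_one hα
  have hc : 0 ≤ β a / 2 / m := by positivity
  have hcd : β a / 2 / m ≤ β a / 2 := div_le_self (by positivity) hm
  refine ⟨(sum_univ_redistribute hα a _ β).trans hβ.1, fun C hC hCu => ?_⟩
  by_cases haC : a ∈ C
  · have hrest := sub_le_sum_of_mem_eCore hε h₀ hβ (C.erase a)
    rw [hdum] at hrest
    rw [sum_redistribute_of_mem _ β haC, ← add_sum_erase C β haC]
    have : 0 ≤ ((C.erase a).card : ℝ) * (β a / 2 / m) := by positivity
    linarith
  · have hC₁ : (1 : ℝ) ≤ C.card := by exact_mod_cast card_pos.mpr hC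
    rw [sum_redistribute_of_notMem _ β haC]
    have := hβ.2 C hC hCu
    have := le_mul_of_one_le_left hc hC₁
    linarith

lemma redistribute_mem_eCore_of_neg (hα : 2 ≤ Fintype.card α) (h₀ : v ∅ = 0)
    (hdum : ∀ C, v (C.erase a) = v C) (hβ : β ∈ eCore v ε) (hε : 0 ≤ ε) (ht : β a < 0) :
    redistribute a (β a / 2) β ∈ eCore v (ε + β a / 2 / (Fintype.card α - 1)) := by
  set m : ℝ := Fintype.card α - 1
  have hm : 1 ≤ m := one_le_card_sub_one hα
  have hc : β a / 2 / m ≤ 0 := div_nonpos_of_nonpos_of_nonneg (by linarith) (by linarith)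
  have hcd : β a / 2 ≤ β a / 2 / m := by
    rw [le_div_iff₀ (by linarith)]
    nlinarith
  have hmc : m * (β a / 2 / m) = β a / 2 := mul_div_cancel₀ _ (by linarith)
  refine ⟨(sum_univ_redistribute hα a _ β).trans hβ.1, fun C hC hCu => ?_⟩
  have hCcard := (card_lt_iff_ne_univ C).mpr hCu
  by_cases haC : a ∈ C
  · have hrest : ((C.erase a).card : ℝ) + 1 ≤ m := by
      have := card_erase_add_one haC
      have : (C.erase a).card + 2 ≤ Fintype.card α := by omega
      have : ((C.erase a).card : ℝ) + 2 ≤ Fintype.card α := by exact_mod_cast this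
      linarith
    rw [sum_redistribute_of_mem _ β haC]
    have := hβ.2 C hC hCu
    have := mul_nonpos_of_nonneg_of_nonpos (sub_nonneg.mpr hrest) hc
    linarith
  · have hCm : (C.card : ℝ) ≤ m := by
      have : (C.card : ℝ) + 1 ≤ Fintype.card α := by exact_mod_cast hCcard
      linarith
    have hins := sub_le_sum_of_mem_eCore hε h₀ hβ (insert a C)
    rw [← hdum, erase_insert haC, sum_insert haC] at hins
    rw [sum_redistribute_of_notMem _ β haC]
    have := mul_le_mul_of_nonpos_right hCm hc
    linarith

end LeastCore

theorem stmt4_general {α : Type*} [Fintype α] [DecidableEq α]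
    (v : Finset α → ℝ)
    (hcard : 2 ≤ Fintype.card α)
    (hzero : ∀ C : Finset α, C.card ≤ 1 → v C = 0)
    (a' : α) (hdum : ∀ C : Finset α, v C - v (C.erase a') = 0)
    (εstar : ℝ)
    (hleast : ∀ ε : ℝ, ε < εstar → eCore v ε = ∅) :
    ∀ β ∈ eCore v εstar, β a' = 0 := by
  intro β hβ
  have hdum' : ∀ C, v (C.erase a') = v C := fun C => (sub_eq_zero.mp (hdum C)).symm
  have h₀ : v ∅ = 0 := hzero ∅ (by simp)
  have hε := nonneg_of_mem_eCore hcard h₀ hdum' hβ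
  have hm := one_le_card_sub_one hcard
  by_contra hpaid
  rcases lt_or_gt_of_ne hpaid with hneg | hpos
  · have hsmaller := redistribute_mem_eCore_of_neg hcard h₀ hdum' hβ hε hneg
    rw [hleast _ (add_lt_of_neg_right _ (div_neg_of_neg_of_pos (by linarith) (by linarith)))]
      at hsmaller
    exact hsmaller
  · have hsmaller := redistribute_mem_eCore_of_pos hcard h₀ hdum' hβ hε hpos
    rw [hleast _ (sub_lt_self _ (by positivity))] at hsmaller
    exact hsmaller

/-- A dummy player receives zero benefit in every least-core allocation. -/
theorem stmt4 {α : Type*} [Fintype α] [DecidableEq α]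
    (v : Finset α → ℝ)
    (hcard : 2 ≤ Fintype.card α)
    (hzero : ∀ C : Finset α, C.card ≤ 1 → v C = 0)
    (a' : α) (hdum : ∀ C : Finset α, v C - v (C.erase a') = 0)
    (εstar : ℝ)
    (hne : (eCore v εstar).Nonempty)
    (hleast : ∀ ε : ℝ, ε < εstar → eCore v ε = ∅) :
    ∀ β ∈ eCore v εstar, β a' = 0 :=
  stmt4_general v hcard hzero a' hdum εstar hleast
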